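/- arXiv:1107.5034 — 3 statements merged into one kernel-verified Lean document; each statement's English description precedes it below -/
import Mathlib

section
/- Let K ⊆ ℂ^n be a compact set with a basis of Stein neighborhoods and suppose A(K, ℂ) has the Mergelyan property. Let σ_1, …, σ_q be distinct points of K and h_1, …, h_q ∈ ℂ^m. For every f ∈ H_loc(K, ℂ^m) and every ε > 0 there is δ > 0 such that: if ‖f(σ_j) − h_j‖ < δ for j = 1, …, q, then there exist an open set U ⊇ K and a holomorphic map g : U → ℂ^m with ‖f(ζ) − g(ζ)‖ < ε for all ζ ∈ K and g(σ_j) = h_j for j = 1, …, q. -/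
noncomputable section

/-- `u` is plurisubharmonic on `Ω ⊆ ℂ^ι`: upper semicontinuous on `Ω` and satisfying the
sub-mean value inequality over every closed complex disc contained in `Ω`. -/
def Psh {ι : Type*} [Fintype ι] (Ω : Set (EuclideanSpace ℂ ι))
    (u : EuclideanSpace ℂ ι → ℝ) : Prop :=
  UpperSemicontinuousOn u Ω ∧
    ∀ a ∈ Ω, ∀ v : EuclideanSpace ℂ ι, ∀ r : ℝ, 0 < r →
      (∀ w : ℂ, ‖w‖ ≤ r → a + w • v ∈ Ω) →
      u a ≤ (1 / (2 * Real.pi)) *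
        ∫ θ in (0:ℝ)..(2 * Real.pi),
          u (a + ((r : ℂ) * Complex.exp (θ * Complex.I)) • v)

/-- `u` is continuous and strictly plurisubharmonic on the open set `Ω`. -/
def StrictPsh {ι : Type*} [Fintype ι] (Ω : Set (EuclideanSpace ℂ ι))
    (u : EuclideanSpace ℂ ι → ℝ) : Prop :=
  ContinuousOn u Ω ∧
    ∀ a ∈ Ω, ∃ B, IsOpen B ∧ a ∈ B ∧ B ⊆ Ω ∧ ∃ c > (0:ℝ),
      Psh B (fun z => u z - c * ‖z‖ ^ 2)

/-- An open set `Ω ⊆ ℂ^ι` is Stein: it carries a continuous strictly plurisubharmonic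
exhaustion function. -/
def IsSteinOpen {ι : Type*} [Fintype ι] (Ω : Set (EuclideanSpace ℂ ι)) : Prop :=
  IsOpen Ω ∧ ∃ u, StrictPsh Ω u ∧ ∀ t : ℝ, IsCompact {z | z ∈ Ω ∧ u z ≤ t}

/-- `L` has a basis of Stein neighborhoods. -/
def HasSteinBasis {ι : Type*} [Fintype ι] (L : Set (EuclideanSpace ℂ ι)) : Prop :=
  ∀ U, IsOpen U → L ⊆ U → ∃ Ω, IsSteinOpen Ω ∧ L ⊆ Ω ∧ Ω ⊆ U

/-- `f ∈ A(K, ℂ^κ)`: continuous on `K` and holomorphic on the interior of `K`. -/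
def MemA {ι κ : Type*} [Fintype ι] [Fintype κ] (K : Set (EuclideanSpace ℂ ι))
    (f : EuclideanSpace ℂ ι → EuclideanSpace ℂ κ) : Prop :=
  ContinuousOn f K ∧ DifferentiableOn ℂ f (interior K)

/-- `f ∈ H(K, ℂ^κ)`: continuous on `K` and uniformly approximable on `K` by maps
holomorphic on open neighborhoods of `K`. -/
def MemH {ι κ : Type*} [Fintype ι] [Fintype κ] (K : Set (EuclideanSpace ℂ ι))
    (f : EuclideanSpace ℂ ι → EuclideanSpace ℂ κ) : Prop :=
  ContinuousOn f K ∧ ∀ ε > (0:ℝ), ∃ W, IsOpen W ∧ K ⊆ W ∧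
    ∃ g, DifferentiableOn ℂ g W ∧ ∀ z ∈ K, ‖g z - f z‖ < ε

/-- `f ∈ H_loc(K, ℂ^κ)`: continuous on `K`, and every point of `K` has an open neighborhood
`U` such that `f` is uniformly approximable on `K ∩ closure U` by maps holomorphic on
open neighborhoods of `K ∩ closure U`. -/
def MemHloc {ι κ : Type*} [Fintype ι] [Fintype κ] (K : Set (EuclideanSpace ℂ ι))
    (f : EuclideanSpace ℂ ι → EuclideanSpace ℂ κ) : Prop :=
  ContinuousOn f K ∧ ∀ z ∈ K, ∃ U, IsOpen U ∧ z ∈ U ∧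
    ∀ ε > (0:ℝ), ∃ W, IsOpen W ∧ K ∩ closure U ⊆ W ∧
      ∃ g, DifferentiableOn ℂ g W ∧ ∀ w ∈ K ∩ closure U, ‖g w - f w‖ < ε

/-- The point `(z, w)` of `ℂ^ι × ℂ^κ`, viewed in the Euclidean space `ℂ^(ι ⊕ κ) ≅ ℂ^(|ι|+|κ|)`. -/
def graphPt {ι κ : Type*} [Fintype ι] [Fintype κ] (z : EuclideanSpace ℂ ι)
    (w : EuclideanSpace ℂ κ) : EuclideanSpace ℂ (ι ⊕ κ) :=
  WithLp.toLp 2 (Sum.elim z w)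

/-- `A(K, ℂ)` has the Mergelyan property: every continuous function on `K` holomorphic on
the interior of `K` is uniformly approximable on `K` by functions holomorphic on open
neighborhoods of `K`. -/
def MergelyanC {n : ℕ} (K : Set (EuclideanSpace ℂ (Fin n))) : Prop :=
  ∀ f : EuclideanSpace ℂ (Fin n) → ℂ, ContinuousOn f K →
    DifferentiableOn ℂ f (interior K) →
    ∀ ε > (0:ℝ), ∃ W, IsOpen W ∧ K ⊆ W ∧
      ∃ g : EuclideanSpace ℂ (Fin n) → ℂ, DifferentiableOn ℂ g W ∧ ∀ z ∈ K, ‖g z - f z‖ < ε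

/-!
On the interior of `K` a map `f ∈ H_loc(K, ℂ^m)` is locally a uniform limit of holomorphic maps;
by the Cauchy estimates their derivatives converge uniformly too, so `f` is holomorphic there and
`f ∈ A(K, ℂ^m)`. The Mergelyan property, applied coordinatewise, gives `g₀` holomorphic near `K`
with `‖f - g₀‖ < δ` on `K`, hence `‖hⱼ - g₀(σⱼ)‖ < 2δ`. Adding `∑ⱼ pⱼ • (hⱼ - g₀(σⱼ))`, where the
`pⱼ` are Lagrange polynomials for the nodes `σⱼ`, corrects the values at the nodes and moves `g₀`
on `K` by at most `2δ · sup_K ∑ⱼ |pⱼ|`; `δ` is chosen small against this bound.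
-/

open Metric Filter Topology Set

section UniformLimit

variable {E G : Type*} [NormedAddCommGroup E] [NormedSpace ℂ E]
  [NormedAddCommGroup G] [NormedSpace ℂ G]

theorem norm_fderiv_le_of_forall_norm_le {g : E → G} {c : E} {R M : ℝ}
    (hd : DifferentiableOn ℂ g (ball c R)) (hR : 0 < R) (hM : ∀ w ∈ ball c R, ‖g w‖ ≤ M) :
    ‖fderiv ℂ g c‖ ≤ 2 * M / R := by
  refine Complex.norm_fderiv_le_div_of_mapsTo_ball hd (fun w hw => ?_) hR
  rw [mem_closedBall, dist_eq_norm, two_mul]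
  exact (norm_sub_le _ _).trans (add_le_add (hM w hw) (hM c (mem_ball_self hR)))

theorem uniformCauchySeqOn_fderiv_of_tendstoUniformlyOn_ball {ι : Type*} {l : Filter ι}
    {F : ι → E → G} {f : E → G} {c : E} {r : ℝ} (hr : 0 < r)
    (hd : ∀ᶠ i in l, DifferentiableOn ℂ (F i) (ball c r))
    (hF : TendstoUniformlyOn F f l (ball c r)) :
    UniformCauchySeqOn (fun i => fderiv ℂ (F i)) l (ball c (r / 2)) := by
  intro u hu
  obtain ⟨ε, hε, hεu⟩ := Metric.mem_uniformity_dist.mp hu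
  have hclose := hF.uniformCauchySeqOn _ (dist_mem_uniformity (by positivity : 0 < ε * r / 8))
  filter_upwards [hclose, hd.prod_mk hd] with k hk ⟨hd₁, hd₂⟩ x hx
  have hsub : ball x (r / 2) ⊆ ball c r :=
    ball_subset_ball' (by linarith [mem_ball.mp hx])
  have hx' : ball c r ∈ 𝓝 x := isOpen_ball.mem_nhds (hsub (mem_ball_self (half_pos hr)))
  apply hεu
  rw [dist_eq_norm, ← fderiv_sub (hd₁.differentiableAt hx') (hd₂.differentiableAt hx')]
  calc ‖fderiv ℂ (F k.1 - F k.2) x‖ ≤ 2 * (ε * r / 8) / (r / 2) :=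
        norm_fderiv_le_of_forall_norm_le ((hd₁.sub hd₂).mono hsub) (half_pos hr)
          fun w hw => by simpa [dist_eq_norm] using (hk w (hsub hw)).le
    _ < ε := by field_simp; linarith

theorem differentiableAt_of_tendstoUniformlyOn_ball [CompleteSpace G] {ι : Type*}
    {l : Filter ι} [l.NeBot] {F : ι → E → G} {f : E → G} {c : E} {r : ℝ} (hr : 0 < r)
    (hd : ∀ᶠ i in l, DifferentiableOn ℂ (F i) (ball c r))
    (hF : TendstoUniformlyOn F f l (ball c r)) :
    DifferentiableAt ℂ f c := by
  have hC := uniformCauchySeqOn_fderiv_of_tendstoUniformlyOn_ball hr hd hF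
  choose! g' hg' using fun x (hx : x ∈ ball c (r / 2)) => CompleteSpace.complete (hC.cauchy_map hx)
  have hball : ball c (r / 2) ∈ 𝓝 c := ball_mem_nhds c (half_pos hr)
  have hderiv : ∀ᶠ k in l ×ˢ 𝓝 c, HasFDerivAt (F k.1) (fderiv ℂ (F k.1) k.2) k.2 := by
    filter_upwards [hd.prod_mk hball] with k ⟨hdk, hk⟩
    exact (hdk.differentiableAt (isOpen_ball.mem_nhds
      (ball_subset_ball (half_le_self hr.le) hk))).hasFDerivAt
  have hlim : ∀ᶠ y in 𝓝 c, Tendsto (fun i => F i y) l (𝓝 (f y)) := by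
    filter_upwards [ball_mem_nhds c hr] with y hy using hF.tendsto_at hy
  exact (hasFDerivAt_of_tendstoUniformlyOnFilter
    ((hC.tendstoUniformlyOn_of_tendsto hg').tendstoUniformlyOnFilter.mono_right
      (le_principal_iff.mpr hball)) hderiv hlim).differentiableAt

theorem differentiableAt_of_forall_approx_on_ball [CompleteSpace G] {f : E → G} {c : E} {r : ℝ}
    (hr : 0 < r)
    (happ : ∀ ε > 0, ∃ g : E → G, DifferentiableOn ℂ g (ball c r) ∧
      ∀ z ∈ ball c r, ‖g z - f z‖ < ε) :
    DifferentiableAt ℂ f c := by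
  choose! g hgd hgf using happ
  refine differentiableAt_of_tendstoUniformlyOn_ball (l := 𝓝[>] (0 : ℝ)) hr
    (eventually_nhdsWithin_of_forall hgd) (Metric.tendstoUniformlyOn_iff.mpr fun ε hε => ?_)
  filter_upwards [Ioo_mem_nhdsGT hε] with δ hδ z hz
  rw [dist_comm, dist_eq_norm]
  exact (hgf δ hδ.1 z hz).trans hδ.2

end UniformLimit

section Approximation

variable {ι κ : Type*} [Fintype ι] [Fintype κ] {K : Set (EuclideanSpace ℂ ι)}
  {f : EuclideanSpace ℂ ι → EuclideanSpace ℂ κ}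

theorem MemHloc.differentiableOn_interior (hf : MemHloc K f) :
    DifferentiableOn ℂ f (interior K) := by
  intro z hz
  obtain ⟨U, hU, hzU, happ⟩ := hf.2 z (interior_subset hz)
  obtain ⟨r, hr, hball⟩ := Metric.isOpen_iff.mp (isOpen_interior.inter hU) z ⟨hz, hzU⟩
  have hsub : ball z r ⊆ K ∩ closure U := fun w hw =>
    ⟨interior_subset (hball hw).1, subset_closure (hball hw).2⟩
  refine (differentiableAt_of_forall_approx_on_ball hr fun ε hε => ?_).differentiableWithinAt
  obtain ⟨W, -, hW, g, hg, hgf⟩ := happ ε hε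
  exact ⟨g, hg.mono (hsub.trans hW), fun w hw => hgf w (hsub hw)⟩

theorem MemHloc.memA (hf : MemHloc K f) : MemA K f :=
  ⟨hf.1, hf.differentiableOn_interior⟩

end Approximation

theorem EuclideanSpace.norm_le_sum_norm {𝕜 κ : Type*} [RCLike 𝕜] [Fintype κ]
    (v : EuclideanSpace 𝕜 κ) : ‖v‖ ≤ ∑ i, ‖v i‖ := by
  classical
  calc ‖v‖ = ‖∑ i, EuclideanSpace.single i (v i)‖ := by
        congr 1; ext j; simp
    _ ≤ ∑ i, ‖EuclideanSpace.single i (v i)‖ := norm_sum_le _ _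
    _ = ∑ i, ‖v i‖ := by simp only [PiLp.norm_single]

theorem MergelyanC.memH {n : ℕ} {κ : Type*} [Fintype κ] {K : Set (EuclideanSpace ℂ (Fin n))}
    (hK : MergelyanC K) {f : EuclideanSpace ℂ (Fin n) → EuclideanSpace ℂ κ} (hf : MemA K f) :
    MemH K f := by
  classical
  refine ⟨hf.1, fun ε hε => ?_⟩
  set ε' := ε / (Fintype.card κ + 1)
  choose W hW hKW g hg hgf using fun i : κ =>
    hK (fun z => f z i) ((EuclideanSpace.proj (𝕜 := ℂ) i).continuous.comp_continuousOn hf.1)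
      ((EuclideanSpace.proj (𝕜 := ℂ) i).differentiable.comp_differentiableOn hf.2) ε'
      (by positivity)
  refine ⟨⋂ i, W i, isOpen_iInter_of_finite hW, subset_iInter hKW,
    fun z => ∑ i, g i z • EuclideanSpace.single i 1,
    DifferentiableOn.fun_sum fun i _ => ((hg i).mono (iInter_subset W i)).smul_const _,
    fun z hz => ?_⟩
  calc ‖∑ i, g i z • EuclideanSpace.single i 1 - f z‖
      ≤ ∑ i, ‖g i z - f z i‖ := by
        refine (EuclideanSpace.norm_le_sum_norm _).trans_eq (Finset.sum_congr rfl fun i _ => ?_)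
        simp [Pi.single_apply]
    _ ≤ Fintype.card κ * ε' := by
        simpa using Finset.sum_le_sum fun i (_ : i ∈ Finset.univ) => (hgf i z hz).le
    _ < ε := by
        rw [mul_div_assoc', div_lt_iff₀ (by positivity)]
        linarith

theorem norm_sum_smul_le {𝕜 E ι : Type*} [NormedField 𝕜] [SeminormedAddCommGroup E]
    [NormedSpace 𝕜 E] (s : Finset ι) (a : ι → 𝕜) {v : ι → E} {η : ℝ}
    (hv : ∀ i ∈ s, ‖v i‖ ≤ η) : ‖∑ i ∈ s, a i • v i‖ ≤ (∑ i ∈ s, ‖a i‖) * η := by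
  rw [Finset.sum_mul]
  refine (norm_sum_le _ _).trans (Finset.sum_le_sum fun i hi => ?_)
  rw [norm_smul]
  exact mul_le_mul_of_nonneg_left (hv i hi) (norm_nonneg _)

theorem exists_lagrange_basis {E ι : Type*} [NormedAddCommGroup E] [InnerProductSpace ℂ E]
    [Fintype ι] {σ : ι → E} (hσ : Function.Injective σ) :
    ∃ p : ι → E → ℂ, (∀ j, Differentiable ℂ (p j)) ∧ (∀ j, p j (σ j) = 1) ∧
      ∀ i j, i ≠ j → p j (σ i) = 0 := by
  classical
  refine ⟨fun j z => ∏ i ∈ Finset.univ.erase j,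
    inner ℂ (σ j - σ i) (z - σ i) * (inner ℂ (σ j - σ i) (σ j - σ i))⁻¹,
    fun j => ?_, fun j => ?_, fun i j hij => ?_⟩
  · have hfactor : ∀ i, Differentiable ℂ fun z =>
        inner ℂ (σ j - σ i) (z - σ i) * (inner ℂ (σ j - σ i) (σ j - σ i))⁻¹ := fun i =>
      ((innerSL ℂ (σ j - σ i)).differentiable.comp (differentiable_id.sub_const (σ i))).mul_const _
    exact fun z => (HasFDerivAt.finsetProd fun i _ => (hfactor i z).hasFDerivAt).differentiableAt
  · refine Finset.prod_eq_one fun i hi => mul_inv_cancel₀ ?_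
    exact inner_self_ne_zero.mpr (sub_ne_zero.mpr (hσ.ne (Finset.ne_of_mem_erase hi).symm))
  · exact Finset.prod_eq_zero (Finset.mem_erase.mpr ⟨hij, Finset.mem_univ i⟩) (by simp)

theorem mergelyan_approximation_with_interpolation_general
    {n m q : ℕ} (K : Set (EuclideanSpace ℂ (Fin n))) (hK : IsCompact K)
    (hMerg : MergelyanC K)
    (σ : Fin q → EuclideanSpace ℂ (Fin n)) (hσinj : Function.Injective σ)
    (hσK : ∀ j, σ j ∈ K)
    (h : Fin q → EuclideanSpace ℂ (Fin m))
    (f : EuclideanSpace ℂ (Fin n) → EuclideanSpace ℂ (Fin m))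
    (hf : MemHloc K f) (ε : ℝ) (hε : 0 < ε) :
    ∃ δ > (0:ℝ), (∀ j, ‖f (σ j) - h j‖ < δ) →
      ∃ U, IsOpen U ∧ K ⊆ U ∧
        ∃ g : EuclideanSpace ℂ (Fin n) → EuclideanSpace ℂ (Fin m),
          DifferentiableOn ℂ g U ∧ (∀ ζ ∈ K, ‖f ζ - g ζ‖ < ε) ∧ ∀ j, g (σ j) = h j := by
  obtain ⟨p, hp, hp_self, hp_other⟩ := exists_lagrange_basis hσinj
  obtain ⟨C, hC⟩ := hK.exists_bound_of_continuousOn (f := fun z => ∑ j, ‖p j z‖)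
    (continuous_finsetSum _ fun j _ => (hp j).continuous.norm).continuousOn
  obtain ⟨δ, hδ, hCδ⟩ := exists_pos_mul_lt hε (1 + 2 * C)
  refine ⟨δ, hδ, fun hfh => ?_⟩
  obtain ⟨U, hU, hKU, g₀, hg₀, hg₀f⟩ := (hMerg.memH hf.memA).2 δ hδ
  have hnode : ∀ j ∈ Finset.univ, ‖h j - g₀ (σ j)‖ ≤ 2 * δ := fun j _ => by
    rw [norm_sub_rev]
    linarith [norm_sub_le_norm_sub_add_norm_sub (g₀ (σ j)) (f (σ j)) (h j), hfh j,
      hg₀f _ (hσK j)]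
  refine ⟨U, hU, hKU, fun z => g₀ z + ∑ j, p j z • (h j - g₀ (σ j)),
    hg₀.add (DifferentiableOn.fun_sum fun j _ => (hp j).differentiableOn.smul_const _),
    fun ζ hζ => ?_, fun i => ?_⟩
  · have hpζ : ∑ j, ‖p j ζ‖ ≤ C := (le_abs_self _).trans (by simpa using hC ζ hζ)
    calc ‖f ζ - (g₀ ζ + ∑ j, p j ζ • (h j - g₀ (σ j)))‖
        ≤ ‖g₀ ζ - f ζ‖ + ‖∑ j, p j ζ • (h j - g₀ (σ j))‖ := by
          rw [← sub_sub, norm_sub_rev (g₀ ζ)]; exact norm_sub_le _ _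
      _ < δ + C * (2 * δ) := add_lt_add_of_lt_of_le (hg₀f ζ hζ)
          ((norm_sum_smul_le _ _ hnode).trans (by gcongr))
      _ = (1 + 2 * C) * δ := by ring
      _ < ε := hCδ
  · show g₀ (σ i) + ∑ j, p j (σ i) • (h j - g₀ (σ j)) = h i
    rw [Finset.sum_eq_single i (fun j _ hji => by rw [hp_other i j hji.symm, zero_smul])
      (by simp), hp_self, one_smul, add_sub_cancel]

/-- **Theorem 4.3** of Poletsky: Mergelyan-type approximation with interpolation. If
`K ⊆ ℂ^n` is compact with a basis of Stein neighborhoods, `A(K, ℂ)` has the Mergelyan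
property, `σ₁, …, σ_q ∈ K` are distinct and `h₁, …, h_q ∈ ℂ^m`, then for any
`f ∈ H_loc(K, ℂ^m)` and `ε > 0` there is `δ > 0` such that whenever `‖f(σⱼ) - hⱼ‖ < δ`
for all `j`, there is a map `g` holomorphic on an open neighborhood of `K` with
`‖f - g‖ < ε` on `K` and `g(σⱼ) = hⱼ`. -/
theorem mergelyan_approximation_with_interpolation
    {n m q : ℕ} (K : Set (EuclideanSpace ℂ (Fin n))) (hK : IsCompact K)
    (hKb : HasSteinBasis K) (hMerg : MergelyanC K)
    (σ : Fin q → EuclideanSpace ℂ (Fin n)) (hσinj : Function.Injective σ)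
    (hσK : ∀ j, σ j ∈ K)
    (h : Fin q → EuclideanSpace ℂ (Fin m))
    (f : EuclideanSpace ℂ (Fin n) → EuclideanSpace ℂ (Fin m))
    (hf : MemHloc K f) (ε : ℝ) (hε : 0 < ε) :
    ∃ δ > (0:ℝ), (∀ j, ‖f (σ j) - h j‖ < δ) →
      ∃ U, IsOpen U ∧ K ⊆ U ∧
        ∃ g : EuclideanSpace ℂ (Fin n) → EuclideanSpace ℂ (Fin m),
          DifferentiableOn ℂ g U ∧ (∀ ζ ∈ K, ‖f ζ - g ζ‖ < ε) ∧ ∀ j, g (σ j) = h j :=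
  mergelyan_approximation_with_interpolation_general K hK hMerg σ hσinj hσK h f hf ε hε
end
end

section
/- For every integer p ≥ 1 and every nonempty finite set S ⊆ ℂ^p there exist p polynomials P_1, …, P_p in p complex variables such that S = {z ∈ ℂ^p : P_1(z) = P_2(z) = ⋯ = P_p(z) = 0}, i.e. the common zero set of P_1, …, P_p is exactly S. -/
/-!
Over an infinite field, choose a linear form `ℓ` that separates the points of the finite set `S`
and does not vanish on a basis vector `eᵢ₀`. The univariate polynomial `∏ s ∈ S, (t - ℓ s)`
composed with `ℓ` vanishes exactly where `ℓ z ∈ ℓ(S)`, and for each coordinate `i ≠ i₀` the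
Lagrange interpolant `gᵢ` of `ℓ s ↦ sᵢ` gives the polynomial `zᵢ - gᵢ(ℓ z)`. On the common zero
set, `z` agrees with some `s ∈ S` under `ℓ` and in every coordinate but `i₀`, hence everywhere
because `ℓ eᵢ₀ ≠ 0`.
-/

open MvPolynomial

theorem Module.exists_dual_apply_ne_zero_injOn {K M : Type*} [Field K] [Infinite K]
    [AddCommGroup M] [Module K M] {S : Set M} (hS : S.Finite) {v : M} (hv : v ≠ 0) :
    ∃ f : Module.Dual K M, f v ≠ 0 ∧ S.InjOn f := by
  have : Finite S.offDiag := hS.offDiag.to_subtype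
  let w : Option S.offDiag → M := fun o => o.elim v fun st => st.1.1 - st.1.2
  obtain ⟨f, hf⟩ := Module.exists_dual_forall_apply_ne_zero (K := K) w <| by
    rintro (_ | ⟨st, -, -, hst⟩)
    exacts [hv, sub_ne_zero.mpr hst]
  refine ⟨f, hf none, fun s hs t ht hst => ?_⟩
  by_contra hne
  exact hf (some ⟨(s, t), hs, ht, hne⟩) (by simp [w, hst])

theorem Module.Dual.eq_of_apply_eq_of_forall_ne {K σ : Type*} [Field K] [DecidableEq σ]
    {f : Module.Dual K (σ → K)} {i₀ : σ} (hf : f (Pi.single i₀ 1) ≠ 0) {z s : σ → K}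
    (hzs : f z = f s) (h : ∀ i ≠ i₀, z i = s i) : z = s := by
  have hsub : z - s = (z i₀ - s i₀) • Pi.single i₀ 1 := by
    ext i
    rcases eq_or_ne i i₀ with rfl | hi
    · simp
    · simp [hi, h i hi]
  have : (z i₀ - s i₀) * f (Pi.single i₀ 1) = 0 := by
    rw [← smul_eq_mul, ← map_smul, ← hsub, map_sub, hzs, sub_self]
  rw [← sub_eq_zero, hsub, (mul_eq_zero.mp this).resolve_right hf, zero_smul]

theorem MvPolynomial.eval_sum_C_mul_X {K σ : Type*} [CommRing K] [Fintype σ] [DecidableEq σ]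
    (f : Module.Dual K (σ → K)) (z : σ → K) :
    eval z (∑ j, C (f (Pi.single j 1)) * X j) = f z := by
  conv_rhs => rw [← Finset.univ_sum_single z, map_sum]
  refine (map_sum _ _ _).trans (Finset.sum_congr rfl fun j _ => ?_)
  rw [eval_mul, eval_C, eval_X, mul_comm, ← smul_eq_mul, ← map_smul, ← Pi.single_smul',
    smul_eq_mul, mul_one]

theorem MvPolynomial.eval_aeval {K σ : Type*} [CommRing K] (z : σ → K) (L : MvPolynomial σ K)
    (q : Polynomial K) : eval z (Polynomial.aeval L q) = q.eval (eval z L) := by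
  rw [Polynomial.aeval_def, Polynomial.hom_eval₂, ← Polynomial.eval₂_id]
  congr
  ext
  simp

theorem Set.Finite.exists_eq_setOf_forall_eval_eq_zero {K σ : Type*} [Field K] [Infinite K]
    [Fintype σ] [Nonempty σ] {S : Set (σ → K)} (hS : S.Finite) :
    ∃ P : σ → MvPolynomial σ K, S = {z | ∀ i, eval z (P i) = 0} := by
  classical
  obtain ⟨i₀⟩ := ‹Nonempty σ›
  obtain ⟨f, hf, hinj⟩ := Module.exists_dual_apply_ne_zero_injOn (K := K) hS
    (Pi.single_ne_zero_iff.mpr one_ne_zero : Pi.single i₀ (1 : K) ≠ 0)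
  set T := hS.toFinset
  replace hinj : Set.InjOn f T := by rwa [hS.coe_toFinset]
  let ℓ : MvPolynomial σ K := ∑ j, C (f (Pi.single j 1)) * X j
  have eval_ℓ (z : σ → K) : eval z ℓ = f z := eval_sum_C_mul_X f z
  refine ⟨Function.update
    (fun i => X i - Polynomial.aeval ℓ (Lagrange.interpolate T f (· i))) i₀
    (Polynomial.aeval ℓ (Lagrange.nodal T f)), Set.ext fun z => ?_⟩
  rw [Set.mem_ofPred_eq, Function.forall_update_iff _ fun _ q => eval z q = 0]
  simp only [map_sub, eval_X, eval_aeval, eval_ℓ, Lagrange.eval_nodal, Finset.prod_eq_zero_iff,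
    sub_eq_zero]
  constructor
  · intro hz
    have hzT : z ∈ T := hS.mem_toFinset.mpr hz
    exact ⟨⟨z, hzT, rfl⟩, fun i _ => (Lagrange.eval_interpolate_at_node (· i) hinj hzT).symm⟩
  · rintro ⟨⟨s, hsT, hzs⟩, hcoord⟩
    obtain rfl : z = s := Module.Dual.eq_of_apply_eq_of_forall_ne hf hzs fun i hi => by
      rw [hcoord i hi, hzs, Lagrange.eval_interpolate_at_node _ hinj hsT]
    exact hS.mem_toFinset.mp hsT

theorem finite_set_is_zero_set_of_p_polynomials_general
    (p : ℕ) (hp : 1 ≤ p) (S : Set (Fin p → ℂ)) (hfin : S.Finite) :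
    ∃ P : Fin p → MvPolynomial (Fin p) ℂ,
      S = {z : Fin p → ℂ | ∀ i, MvPolynomial.eval z (P i) = 0} :=
  have : Nonempty (Fin p) := ⟨⟨0, hp⟩⟩
  hfin.exists_eq_setOf_forall_eval_eq_zero

/-- The claim in the proof of Poletsky's Theorem 4.6: every nonempty finite set
`S ⊆ ℂ^p` (`p ≥ 1`) is the common zero set of exactly `p` polynomials in `p` complex
variables. -/
theorem finite_set_is_zero_set_of_p_polynomials
    (p : ℕ) (hp : 1 ≤ p) (S : Set (Fin p → ℂ)) (hfin : S.Finite) (hne : S.Nonempty) :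
    ∃ P : Fin p → MvPolynomial (Fin p) ℂ,
      S = {z : Fin p → ℂ | ∀ i, MvPolynomial.eval z (P i) = 0} :=
  finite_set_is_zero_set_of_p_polynomials_general p hp S hfin
end

section
/- Let W ⊆ ℂ^n be an open set and let g : W × [0,1] → ℂ^p be a continuous map such that for every t ∈ [0,1] the map z ↦ g(z, t) is holomorphic on W. Then for every compact set Q ⊆ W and every ε > 0 there exist an integer d ≥ 0 and holomorphic maps c_0, c_1, …, c_d : W → ℂ^p such that ‖ Σ_{i=0}^{d} c_i(z) t^i − g(z, t) ‖ < ε for all z ∈ Q and all t ∈ [0,1]. -/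
/-!
Restricted to `Q × [0,1]`, `g` is a continuous path `t ↦ g(·, t)` in the Banach space `C(Q, ℂ^p)`,
so the vector-valued Bernstein theorem approximates it uniformly by
`Σ_k b_{d,k}(t) g(·, k/d)`. Expanding the Bernstein basis polynomials `b_{d,k}` in powers of `t`
gives coefficients that are finite real combinations of the holomorphic maps `g(·, k/d)`.
-/

open scoped unitInterval
open Polynomial Filter

theorem Polynomial.natDegree_bernsteinPolynomial_le (R : Type*) [CommRing R] (n ν : ℕ) :
    (bernsteinPolynomial R n ν).natDegree ≤ n := by
  rcases le_or_gt ν n with h | h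
  · unfold bernsteinPolynomial
    compute_degree
    omega
  · simp [bernsteinPolynomial.eq_zero_of_lt R h]

theorem bernstein_apply_eq_eval (n ν : ℕ) (t : I) :
    bernstein n ν t = (bernsteinPolynomial ℝ n ν).eval (t : ℝ) := by
  simp [bernstein_apply, bernsteinPolynomial]

theorem Polynomial.sum_pow_smul_sum_coeff_smul {R M ι : Type*} [CommSemiring R]
    [AddCommMonoid M] [Module R M] (s : Finset ι) (P : ι → R[X]) (v : ι → M) {N : ℕ}
    (hN : ∀ k ∈ s, (P k).natDegree < N) (t : R) :
    ∑ i ∈ Finset.range N, t ^ i • ∑ k ∈ s, (P k).coeff i • v k =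
      ∑ k ∈ s, (P k).eval t • v k := by
  simp_rw [Finset.smul_sum, smul_smul]
  rw [Finset.sum_comm]
  refine Finset.sum_congr rfl fun k hk => ?_
  rw [eval_eq_sum_range' (hN k hk), Finset.sum_smul]
  simp_rw [mul_comm]

theorem eventually_norm_bernstein_sum_sub_lt {X E : Type*} [TopologicalSpace X]
    [NormedAddCommGroup E] [NormedSpace ℝ E] {K : Set X} (hK : IsCompact K) {f : X → ℝ → E}
    (hf : ContinuousOn (fun q : X × ℝ => f q.1 q.2) (K ×ˢ Set.Icc 0 1)) {ε : ℝ} (hε : 0 < ε) :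
    ∀ᶠ d in atTop, ∀ x ∈ K, ∀ t : I,
      ‖∑ k : Fin (d + 1), bernstein d k t • f x (bernstein.z k) - f x t‖ < ε := by
  have : CompactSpace K := isCompact_iff_compactSpace.mp hK
  let F : C(I, C(K, E)) := ContinuousMap.curry
    ⟨fun q : I × K => f q.2 q.1,
      hf.comp_continuous (f := fun q : I × K => ((q.2 : X), (q.1 : ℝ))) (by fun_prop)
        fun q => ⟨q.2.2, q.1.2⟩⟩
  filter_upwards [Metric.tendsto_nhds.mp (bernsteinApproximation_uniform F) ε hε] with d hd x hx t
  calc ‖∑ k : Fin (d + 1), bernstein d k t • f x (bernstein.z k) - f x t‖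
      = ‖(bernsteinApproximation d F - F) t ⟨x, hx⟩‖ := by
        simp [bernsteinApproximation.apply, F]
    _ ≤ ‖bernsteinApproximation d F - F‖ :=
        ((bernsteinApproximation d F - F) t).norm_coe_le_norm _ |>.trans
          ((bernsteinApproximation d F - F).norm_coe_le_norm t)
    _ < ε := by rwa [← dist_eq_norm]

theorem approx_polynomial_in_t_general
    {n p : ℕ} (W : Set (EuclideanSpace ℂ (Fin n)))
    (g : EuclideanSpace ℂ (Fin n) → ℝ → EuclideanSpace ℂ (Fin p))
    (hgc : ContinuousOn (fun q : EuclideanSpace ℂ (Fin n) × ℝ => g q.1 q.2)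
      (W ×ˢ Set.Icc (0:ℝ) 1))
    (hgh : ∀ t ∈ Set.Icc (0:ℝ) 1, DifferentiableOn ℂ (fun z => g z t) W)
    (Q : Set (EuclideanSpace ℂ (Fin n))) (hQ : IsCompact Q) (hQW : Q ⊆ W)
    (ε : ℝ) (hε : 0 < ε) :
    ∃ (d : ℕ) (c : ℕ → EuclideanSpace ℂ (Fin n) → EuclideanSpace ℂ (Fin p)),
      (∀ i ≤ d, DifferentiableOn ℂ (c i) W) ∧
      ∀ z ∈ Q, ∀ t ∈ Set.Icc (0:ℝ) 1,
        ‖(∑ i ∈ Finset.range (d + 1), t ^ i • c i z) - g z t‖ < ε := by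
  obtain ⟨d, hd⟩ := (eventually_norm_bernstein_sum_sub_lt hQ
    (hgc.mono (Set.prod_mono hQW subset_rfl)) hε).exists
  refine ⟨d, fun i z => ∑ k : Fin (d + 1),
    (bernsteinPolynomial ℝ d k).coeff i • g z (bernstein.z k), fun i _ => ?_, fun z hz t ht => ?_⟩
  · exact DifferentiableOn.fun_sum fun k _ => (hgh _ (bernstein.z k).2).fun_const_smul _
  · beta_reduce
    rw [sum_pow_smul_sum_coeff_smul _ (fun k : Fin (d + 1) => bernsteinPolynomial ℝ d k)
      _ fun k _ => (natDegree_bernsteinPolynomial_le ℝ d k).trans_lt (Nat.lt_add_one d)]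
    simpa only [bernstein_apply_eq_eval] using hd z hz ⟨t, ht⟩

/-- The approximation step in the proof of Poletsky's Theorem 4.1: if `W ⊆ ℂ^n` is open
and `g : W × [0,1] → ℂ^p` is continuous and holomorphic in the first variable, then `g`
can be approximated, uniformly on `Q × [0,1]` for any compact `Q ⊆ W`, by maps
`Σ_{i=0}^{d} c_i(z) t^i` that are holomorphic in `z ∈ W` and polynomial in `t`. -/
theorem approx_polynomial_in_t
    {n p : ℕ} (W : Set (EuclideanSpace ℂ (Fin n))) (hW : IsOpen W)
    (g : EuclideanSpace ℂ (Fin n) → ℝ → EuclideanSpace ℂ (Fin p))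
    (hgc : ContinuousOn (fun q : EuclideanSpace ℂ (Fin n) × ℝ => g q.1 q.2)
      (W ×ˢ Set.Icc (0:ℝ) 1))
    (hgh : ∀ t ∈ Set.Icc (0:ℝ) 1, DifferentiableOn ℂ (fun z => g z t) W)
    (Q : Set (EuclideanSpace ℂ (Fin n))) (hQ : IsCompact Q) (hQW : Q ⊆ W)
    (ε : ℝ) (hε : 0 < ε) :
    ∃ (d : ℕ) (c : ℕ → EuclideanSpace ℂ (Fin n) → EuclideanSpace ℂ (Fin p)),
      (∀ i ≤ d, DifferentiableOn ℂ (c i) W) ∧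
      ∀ z ∈ Q, ∀ t ∈ Set.Icc (0:ℝ) 1,
        ‖(∑ i ∈ Finset.range (d + 1), t ^ i • c i z) - g z t‖ < ε :=
  approx_polynomial_in_t_general W g hgc hgh Q hQ hQW ε hε
end
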